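/- arXiv:math/0509441 — 5 statements merged into one kernel-verified Lean document; each statement's English description precedes it below -/
import Mathlib

section
/- Let Z be a standard normal random variable. If Y is a real random variable such that E[f′(Y) − Y f(Y)] = 0 for every bounded continuously differentiable function f : ℝ → ℝ with bounded derivative, then Y has the standard normal distribution N(0, 1). -/
/-!
For a bounded continuous `k` with `E k(Z) = 0`, the function
`f w = φ(w)⁻¹ ∫_{-∞}^w k φ` (with `φ` the standard normal density) solves Stein's equation
`f' - w f = k`. Since `∫ k φ = 0`, the integral defining `f w` is also `-∫_w^∞ k φ`, and the
Gaussian tail bound `∫_w^∞ φ ≤ φ(w) / w` (Mills' ratio) shows that `w f w` is bounded; with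
continuity on `[-1, 1]`, so are `f` and `f' = w f + k`. The hypothesis applied to `f` gives
`E k(Y) = 0`. Centring an arbitrary bounded continuous `k` yields `E k(Y) = E k(Z)`, and
bounded continuous functions determine a finite Borel measure on `ℝ`.
-/

open MeasureTheory ProbabilityTheory
open Real Set Filter Topology
open scoped NNReal BoundedContinuousFunction

lemma hasDerivAt_setIntegral_Iic {E : Type*} [NormedAddCommGroup E] [NormedSpace ℝ E]
    [CompleteSpace E] {g : ℝ → E} (hg : Continuous g) (hgi : Integrable g) (w : ℝ) :
    HasDerivAt (fun w => ∫ y in Iic w, g y) (g w) w := by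
  have hsplit :
      (fun w => ∫ y in Iic w, g y) = fun w => (∫ y in Iic 0, g y) + ∫ y in 0..w, g y := by
    funext w
    rw [← intervalIntegral.integral_Iic_sub_Iic hgi.integrableOn hgi.integrableOn]
    abel
  rw [hsplit]
  exact (intervalIntegral.integral_hasDerivAt_right (hg.intervalIntegrable _ _)
    hg.aestronglyMeasurable.stronglyMeasurableAtFilter hg.continuousAt).const_add _

lemma exists_bound_of_continuous_of_abs_mul_le {g : ℝ → ℝ} (hg : Continuous g) {D : ℝ}
    (hD : ∀ w ≠ 0, |w * g w| ≤ D) : ∃ C, ∀ w, |g w| ≤ C ∧ |w * g w| ≤ C := by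
  obtain ⟨C, hC⟩ := (isCompact_Icc (a := (-1 : ℝ)) (b := 1)).exists_bound_of_continuousOn
    hg.continuousOn
  refine ⟨max C D, fun w => ?_⟩
  rcases le_or_gt |w| 1 with hw | hw
  · have hgw : |g w| ≤ C := hC w (abs_le.1 hw)
    have : |w * g w| ≤ |g w| := by
      rw [abs_mul]; exact mul_le_of_le_one_left (abs_nonneg _) hw
    constructor <;> linarith [le_max_left C D]
  · have hwD := hD w (abs_pos.1 (one_pos.trans hw))
    have : |g w| ≤ |w * g w| := by
      rw [abs_mul]; exact le_mul_of_one_le_left (abs_nonneg _) hw.le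
    constructor <;> linarith [le_max_right C D]

lemma hasDerivAt_gaussianPDFReal (μ : ℝ) (v : ℝ≥0) (x : ℝ) :
    HasDerivAt (gaussianPDFReal μ v) (-(x - μ) / v * gaussianPDFReal μ v x) x := by
  have hexp : HasDerivAt (fun x => -(x - μ) ^ 2 / (2 * v)) (-(x - μ) / v) x :=
    ((((hasDerivAt_id x).sub_const μ).pow 2).neg.div_const (2 * (v : ℝ))).congr_deriv
      (by simp only [id]; ring)
  exact (hexp.exp.const_mul (√(2 * π * v))⁻¹).congr_deriv (by rw [gaussianPDFReal_def]; ring)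

local notation "φ" => gaussianPDFReal 0 1

lemma hasDerivAt_gaussianPDFReal_zero_one (x : ℝ) : HasDerivAt φ (-x * φ x) x := by
  simpa using hasDerivAt_gaussianPDFReal 0 1 x

lemma gaussianPDFReal_zero_neg (v : ℝ≥0) (x : ℝ) :
    gaussianPDFReal 0 v (-x) = gaussianPDFReal 0 v x := by
  simp [gaussianPDFReal_def]

lemma integrable_mul_gaussianPDFReal_zero_one : Integrable fun x => x * φ x := by
  convert (integrable_mul_exp_neg_mul_sq (b := 1 / 2) (by norm_num)).const_mul (√(2 * π))⁻¹
    using 2 with x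
  simp only [gaussianPDFReal_def]
  push_cast
  ring_nf

lemma tendsto_gaussianPDFReal_zero_one_atTop : Tendsto φ atTop (𝓝 0) :=
  tendsto_zero_of_hasDerivAt_of_integrableOn_Ioi (a := 0)
    (fun x _ => hasDerivAt_gaussianPDFReal_zero_one x)
    (by simpa using integrable_mul_gaussianPDFReal_zero_one.neg.integrableOn)
    (integrable_gaussianPDFReal 0 1).integrableOn

lemma setIntegral_Ioi_mul_gaussianPDFReal_zero_one (w : ℝ) : ∫ y in Ioi w, y * φ y = φ w := by
  have hderiv (x : ℝ) : HasDerivAt (fun x => -φ x) (x * φ x) x :=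
    (hasDerivAt_gaussianPDFReal_zero_one x).neg.congr_deriv (by ring)
  rw [integral_Ioi_of_hasDerivAt_of_tendsto' (fun x _ => hderiv x)
    integrable_mul_gaussianPDFReal_zero_one.integrableOn
    (by simpa using tendsto_gaussianPDFReal_zero_one_atTop.neg)]
  ring

lemma setIntegral_Ioi_gaussianPDFReal_zero_one_le {w : ℝ} (hw : 0 < w) :
    ∫ y in Ioi w, φ y ≤ φ w / w :=
  calc ∫ y in Ioi w, φ y ≤ ∫ y in Ioi w, y * φ y / w := by
        refine setIntegral_mono_on (integrable_gaussianPDFReal 0 1).integrableOn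
          (integrable_mul_gaussianPDFReal_zero_one.div_const w).integrableOn measurableSet_Ioi
          fun y hy => ?_
        rw [le_div_iff₀ hw, mul_comm]
        exact mul_le_mul_of_nonneg_right (le_of_lt hy) (gaussianPDFReal_nonneg 0 1 y)
    _ = φ w / w := by rw [integral_div, setIntegral_Ioi_mul_gaussianPDFReal_zero_one]

lemma setIntegral_Iic_gaussianPDFReal_zero_one_le {w : ℝ} (hw : w < 0) :
    ∫ y in Iic w, φ y ≤ φ w / -w := by
  have := setIntegral_Ioi_gaussianPDFReal_zero_one_le (neg_pos.2 hw)
  simp_rw [← integral_comp_neg_Iic, gaussianPDFReal_zero_neg] at this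
  exact this

lemma integral_gaussianReal_zero_one_eq (k : ℝ → ℝ) :
    ∫ x, k x ∂gaussianReal 0 1 = ∫ x, k x * φ x := by
  simp [integral_gaussianReal_eq_integral_smul one_ne_zero, mul_comm]

namespace BoundedContinuousFunction

variable (k : ℝ →ᵇ ℝ)

lemma integrable_mul_gaussianPDFReal : Integrable fun x => k x * φ x :=
  (integrable_gaussianPDFReal 0 1).bdd_mul k.continuous.aestronglyMeasurable
    (ae_of_all _ k.norm_coe_le_norm)

lemma abs_setIntegral_mul_gaussianPDFReal_le (s : Set ℝ) :
    |∫ y in s, k y * φ y| ≤ ‖k‖ * ∫ y in s, φ y := by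
  rw [← Real.norm_eq_abs, ← integral_const_mul]
  refine norm_integral_le_of_norm_le ((integrable_gaussianPDFReal 0 1).const_mul _).integrableOn
    (ae_of_all _ fun y => ?_)
  rw [norm_mul, Real.norm_of_nonneg (gaussianPDFReal_nonneg 0 1 y)]
  exact mul_le_mul_of_nonneg_right (k.norm_coe_le_norm y) (gaussianPDFReal_nonneg 0 1 y)

variable {k}

lemma abs_setIntegral_Iic_mul_gaussianPDFReal_le (hk : ∫ x, k x ∂gaussianReal 0 1 = 0)
    {w : ℝ} (hw : w ≠ 0) : |∫ y in Iic w, k y * φ y| ≤ ‖k‖ * (φ w / |w|) := by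
  rcases hw.lt_or_gt with hw | hw
  · rw [abs_of_neg hw]
    exact (k.abs_setIntegral_mul_gaussianPDFReal_le _).trans
      (mul_le_mul_of_nonneg_left (setIntegral_Iic_gaussianPDFReal_zero_one_le hw) (norm_nonneg k))
  · have hint := k.integrable_mul_gaussianPDFReal
    have hsplit : ∫ y in Iic w, k y * φ y = -∫ y in Ioi w, k y * φ y := by
      rw [integral_gaussianReal_zero_one_eq,
        ← intervalIntegral.integral_Iic_add_Ioi hint.integrableOn hint.integrableOn] at hk
      linarith
    rw [hsplit, abs_neg, abs_of_pos hw]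
    exact (k.abs_setIntegral_mul_gaussianPDFReal_le _).trans
      (mul_le_mul_of_nonneg_left (setIntegral_Ioi_gaussianPDFReal_zero_one_le hw) (norm_nonneg k))

end BoundedContinuousFunction

noncomputable def steinSolution (k : ℝ →ᵇ ℝ) (w : ℝ) : ℝ :=
  (∫ y in Iic w, k y * φ y) / φ w

section steinSolution

variable (k : ℝ →ᵇ ℝ)

lemma hasDerivAt_steinSolution (w : ℝ) :
    HasDerivAt (steinSolution k) (w * steinSolution k w + k w) w := by
  have hφ := hasDerivAt_gaussianPDFReal_zero_one
  have hG := hasDerivAt_setIntegral_Iic (g := fun y => k y * φ y)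
    (k.continuous.mul (continuous_iff_continuousAt.2 fun x => (hφ x).continuousAt))
    k.integrable_mul_gaussianPDFReal w
  have hφw := (gaussianPDFReal_pos 0 1 w one_ne_zero).ne'
  refine (hG.div (hφ w) hφw).congr_deriv ?_
  simp only [steinSolution]
  field_simp
  ring

lemma deriv_steinSolution :
    deriv (steinSolution k) = fun w => w * steinSolution k w + k w :=
  funext fun w => (hasDerivAt_steinSolution k w).deriv

lemma continuous_steinSolution : Continuous (steinSolution k) :=
  continuous_iff_continuousAt.2 fun w => (hasDerivAt_steinSolution k w).continuousAt

lemma contDiff_steinSolution : ContDiff ℝ 1 (steinSolution k) := by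
  rw [contDiff_one_iff_deriv, deriv_steinSolution]
  exact ⟨fun w => (hasDerivAt_steinSolution k w).differentiableAt,
    (continuous_id.mul (continuous_steinSolution k)).add k.continuous⟩

variable {k}

lemma abs_mul_steinSolution_le (hk : ∫ x, k x ∂gaussianReal 0 1 = 0) {w : ℝ} (hw : w ≠ 0) :
    |w * steinSolution k w| ≤ ‖k‖ := by
  have hφw := gaussianPDFReal_pos 0 1 w one_ne_zero
  have hG := k.abs_setIntegral_Iic_mul_gaussianPDFReal_le hk hw
  rw [steinSolution, abs_mul, abs_div, abs_of_pos hφw, mul_div_assoc', div_le_iff₀ hφw]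
  calc |w| * |∫ y in Iic w, k y * φ y| ≤ |w| * (‖k‖ * (φ w / |w|)) := by gcongr
    _ = ‖k‖ * φ w := by field_simp

lemma exists_bound_steinSolution (hk : ∫ x, k x ∂gaussianReal 0 1 = 0) :
    ∃ C, ∀ w, |steinSolution k w| ≤ C ∧ |w * steinSolution k w| ≤ C :=
  exists_bound_of_continuous_of_abs_mul_le (continuous_steinSolution k)
    fun _ hw => abs_mul_steinSolution_le hk hw

lemma exists_abs_steinSolution_le (hk : ∫ x, k x ∂gaussianReal 0 1 = 0) :
    ∃ C, ∀ w, |steinSolution k w| ≤ C :=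
  let ⟨C, hC⟩ := exists_bound_steinSolution hk
  ⟨C, fun w => (hC w).1⟩

lemma exists_abs_deriv_steinSolution_le (hk : ∫ x, k x ∂gaussianReal 0 1 = 0) :
    ∃ C, ∀ w, |deriv (steinSolution k) w| ≤ C := by
  obtain ⟨C, hC⟩ := exists_bound_steinSolution hk
  refine ⟨C + ‖k‖, fun w => ?_⟩
  rw [deriv_steinSolution]
  exact (abs_add_le _ _).trans (add_le_add (hC w).2 (k.norm_coe_le_norm w))

end steinSolution

/-- Stein's characterization of the standard normal distribution: if
`E[f'(Y) - Y f(Y)] = 0` for every bounded `C¹` function `f : ℝ → ℝ` with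
bounded derivative, then `Y` is standard normal. -/
theorem stein_characterization_of_gaussian
    {Ω : Type*} [MeasurableSpace Ω] (P : Measure Ω) [IsProbabilityMeasure P]
    (Y : Ω → ℝ) (hY : Measurable Y)
    (h : ∀ f : ℝ → ℝ, ContDiff ℝ 1 f → (∃ C : ℝ, ∀ x : ℝ, |f x| ≤ C) →
      (∃ C : ℝ, ∀ x : ℝ, |deriv f x| ≤ C) →
      ∫ ω, (deriv f (Y ω) - Y ω * f (Y ω)) ∂P = 0) :
    P.map Y = gaussianReal 0 1 := by
  have : IsProbabilityMeasure (P.map Y) := Measure.isProbabilityMeasure_map hY.aemeasurable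
  refine ext_of_forall_integral_eq_of_IsFiniteMeasure fun k => ?_
  set k₀ := k + BoundedContinuousFunction.const ℝ (-∫ x, k x ∂gaussianReal 0 1)
  have hk₀ : ∫ x, k₀ x ∂gaussianReal 0 1 = 0 := by
    rw [BoundedContinuousFunction.integral_add_const]
    simp
  have hstein := h (steinSolution k₀) (contDiff_steinSolution k₀)
    (exists_abs_steinSolution_le hk₀) (exists_abs_deriv_steinSolution_le hk₀)
  simp only [deriv_steinSolution, add_sub_cancel_left] at hstein
  rw [← integral_map hY.aemeasurable k₀.continuous.aestronglyMeasurable,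
    BoundedContinuousFunction.integral_add_const] at hstein
  simpa [add_neg_eq_zero] using hstein
end

section
/- Let Z be a standard normal random variable, let g : ℝ → ℝ be a bounded measurable function, and let U_o g (t) = e^{t²/2} ∫_{−∞}^{t} [g(x) − E g(Z)] e^{−x²/2} dx. Then ‖U_o g‖_∞ ≤ √(π/2) · ‖g − E g(Z)‖_∞ ≤ √(2π) · ‖g‖_∞. -/
open MeasureTheory ProbabilityTheory
open scoped NNReal ENNReal

/-- `E g(Z)` for `Z` standard normal. -/
noncomputable def gaussMean (g : ℝ → ℝ) : ℝ :=
  ∫ x, g x ∂(gaussianReal 0 1)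

/-- Stein's operator: `U_o g (t) = e^{t²/2} ∫_{-∞}^t (g(x) - E g(Z)) e^{-x²/2} dx`. -/
noncomputable def steinUo (g : ℝ → ℝ) (t : ℝ) : ℝ :=
  Real.exp (t ^ 2 / 2) * ∫ x in Set.Iic t, (g x - gaussMean g) * Real.exp (-x ^ 2 / 2)

lemma int_phi : Integrable (fun x : ℝ => Real.exp (-x ^ 2 / 2)) := by
  have := integrable_exp_neg_mul_sq (b := (1:ℝ)/2) (by norm_num)
  exact this.congr (Filter.Eventually.of_forall fun x => by ring_nf)

lemma phi_total : ∫ x : ℝ, Real.exp (-x ^ 2 / 2) = Real.sqrt (2 * Real.pi) := by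
  have := integral_gaussian ((1:ℝ)/2)
  rw [show Real.pi / ((1:ℝ)/2) = 2 * Real.pi by ring] at this
  rw [← this]
  congr 1 with x
  ring_nf

lemma phi_Ioi0 : ∫ x in Set.Ioi (0:ℝ), Real.exp (-x ^ 2 / 2) = Real.sqrt (Real.pi / 2) := by
  have := integral_gaussian_Ioi ((1:ℝ)/2)
  rw [show Real.pi / ((1:ℝ)/2) = 2 * Real.pi by ring] at this
  have h2 : Real.sqrt (2 * Real.pi) / 2 = Real.sqrt (Real.pi / 2) := by
    rw [show Real.pi / 2 = (2 * Real.pi) / 4 by ring, Real.sqrt_div (by positivity),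
      show Real.sqrt 4 = 2 by rw [show (4:ℝ) = 2 ^ 2 by norm_num, Real.sqrt_sq]; norm_num]
  rw [← h2, ← this]
  congr 1 with x
  ring_nf

lemma phi_shift (s : ℝ) :
    ∫ x in Set.Ioi s, Real.exp (-(x - s) ^ 2 / 2) = Real.sqrt (Real.pi / 2) := by
  rw [← phi_Ioi0]
  rw [← integral_indicator measurableSet_Ioi, ← integral_indicator measurableSet_Ioi]
  rw [← integral_sub_right_eq_self (fun x => Set.indicator (Set.Ioi (0:ℝ))
    (fun y => Real.exp (-y ^ 2 / 2)) x) s]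
  congr 1 with x
  by_cases hx : x ∈ Set.Ioi s
  · rw [Set.indicator_of_mem hx, Set.indicator_of_mem (by simpa [Set.mem_Ioi, sub_pos] using hx)]
  · rw [Set.indicator_of_notMem hx, Set.indicator_of_notMem
      (by simpa [Set.mem_Ioi, sub_pos] using hx)]

lemma tail_bound {s : ℝ} (hs : 0 ≤ s) :
    ∫ x in Set.Ioi s, Real.exp (-x ^ 2 / 2) ≤
      Real.exp (-s ^ 2 / 2) * Real.sqrt (Real.pi / 2) := by
  have key : ∀ x ∈ Set.Ioi s, Real.exp (-x ^ 2 / 2) ≤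
      Real.exp (-s ^ 2 / 2) * Real.exp (-(x - s) ^ 2 / 2) := by
    intro x hx
    rw [← Real.exp_add]
    apply Real.exp_le_exp.2
    nlinarith [Set.mem_Ioi.1 hx]
  have hint : IntegrableOn (fun x : ℝ => Real.exp (-s ^ 2 / 2) * Real.exp (-(x - s) ^ 2 / 2))
      (Set.Ioi s) := by
    refine Integrable.integrableOn ?_
    exact (int_phi.comp_sub_right s).const_mul _
  calc ∫ x in Set.Ioi s, Real.exp (-x ^ 2 / 2)
      ≤ ∫ x in Set.Ioi s, Real.exp (-s ^ 2 / 2) * Real.exp (-(x - s) ^ 2 / 2) := by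
        refine setIntegral_mono_on (int_phi.integrableOn) hint measurableSet_Ioi key
    _ = Real.exp (-s ^ 2 / 2) * ∫ x in Set.Ioi s, Real.exp (-(x - s) ^ 2 / 2) :=
        integral_const_mul _ _
    _ = Real.exp (-s ^ 2 / 2) * Real.sqrt (Real.pi / 2) := by rw [phi_shift]

lemma phi_Iic (t : ℝ) :
    ∫ x in Set.Iic t, Real.exp (-x ^ 2 / 2) = ∫ x in Set.Ioi (-t), Real.exp (-x ^ 2 / 2) := by
  rw [← integral_comp_neg_Iic t (fun x => Real.exp (-x ^ 2 / 2))]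
  congr 1 with x
  rw [neg_pow]
  norm_num

lemma gaussMean_eq (g : ℝ → ℝ) (hg : Measurable g) :
    gaussMean g * Real.sqrt (2 * Real.pi) = ∫ x : ℝ, g x * Real.exp (-x ^ 2 / 2) := by
  have hpdf : ∀ x : ℝ, gaussianPDFReal 0 1 x = (Real.sqrt (2 * Real.pi))⁻¹ *
      Real.exp (-x ^ 2 / 2) := by
    intro x
    simp only [gaussianPDFReal, NNReal.coe_one, mul_one, sub_zero]
  have key : gaussMean g = ∫ x : ℝ, gaussianPDFReal 0 1 x * g x := by
    rw [gaussMean, gaussianReal_of_var_ne_zero 0 one_ne_zero,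
      show gaussianPDF 0 1 = fun x => ((Real.toNNReal (gaussianPDFReal 0 1 x) : ℝ≥0) : ℝ≥0∞)
        from rfl,
      integral_withDensity_eq_integral_smul ((measurable_gaussianPDFReal 0 1).real_toNNReal) g]
    refine integral_congr_ae (Filter.Eventually.of_forall fun x => ?_)
    simp [NNReal.smul_def, Real.coe_toNNReal _ (gaussianPDFReal_nonneg 0 1 x)]
  rw [key]
  simp_rw [hpdf, mul_assoc]
  rw [integral_const_mul]
  have h2π : Real.sqrt (2 * Real.pi) ≠ 0 := by positivity
  rw [show ∫ x : ℝ, Real.exp (-x ^ 2 / 2) * g x = ∫ x : ℝ, g x * Real.exp (-x ^ 2 / 2) from by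
    congr 1 with x; ring]
  field_simp

/-- Sup-norm bound for `U_o g`:
`‖U_o g‖_∞ ≤ √(π/2) ‖g - E g(Z)‖_∞ ≤ √(2π) ‖g‖_∞`. -/
theorem steinUo_sup_norm_bound
    (g : ℝ → ℝ) (hg : Measurable g) (hgb : ∃ C : ℝ, ∀ x : ℝ, |g x| ≤ C) :
    ((⨆ t : ℝ, |steinUo g t|) ≤
        Real.sqrt (Real.pi / 2) * (⨆ x : ℝ, |g x - gaussMean g|)) ∧
    Real.sqrt (Real.pi / 2) * (⨆ x : ℝ, |g x - gaussMean g|) ≤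
      Real.sqrt (2 * Real.pi) * (⨆ x : ℝ, |g x|) := by
  obtain ⟨C, hC⟩ := hgb
  set μg := gaussMean g with hμg
  set φ : ℝ → ℝ := fun x => Real.exp (-x ^ 2 / 2) with hφ
  have hφ0 : ∀ x, 0 ≤ φ x := fun x => (Real.exp_pos _).le
  -- boundedness of |g - μg|
  have hbdd : BddAbove (Set.range fun x => |g x - μg|) := by
    refine ⟨C + |μg|, ?_⟩
    rintro _ ⟨x, rfl⟩
    calc |g x - μg| ≤ |g x| + |μg| := abs_sub _ _
      _ ≤ C + |μg| := by linarith [hC x]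
  set M := ⨆ x : ℝ, |g x - μg| with hM
  have hle : ∀ x, |g x - μg| ≤ M := fun x => le_ciSup hbdd x
  have hM0 : 0 ≤ M := le_trans (abs_nonneg _) (hle 0)
  -- the integrand
  set h : ℝ → ℝ := fun x => (g x - μg) * φ x with hh
  have hhm : Measurable h := ((hg.sub measurable_const).mul (by fun_prop))
  have hhint : Integrable h := by
    refine Integrable.mono' (int_phi.const_mul M) hhm.aestronglyMeasurable ?_
    filter_upwards with x
    simp only [hh, Real.norm_eq_abs, abs_mul]
    rw [abs_of_nonneg (hφ0 x)]
    exact mul_le_mul_of_nonneg_right (hle x) (hφ0 x)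
  -- total integral is zero
  have habsle : ∀ x, |h x| ≤ M * φ x := by
    intro x
    simp only [hh, abs_mul]
    rw [abs_of_nonneg (hφ0 x)]
    exact mul_le_mul_of_nonneg_right (hle x) (hφ0 x)
  have hgφint : Integrable (fun x : ℝ => g x * φ x) := by
    refine Integrable.mono' (int_phi.const_mul C) ((hg.mul (by fun_prop)).aestronglyMeasurable) ?_
    filter_upwards with x
    simp only [Real.norm_eq_abs, abs_mul]
    rw [abs_of_nonneg (hφ0 x)]
    exact mul_le_mul_of_nonneg_right (hC x) (hφ0 x)
  have htotal : ∫ x : ℝ, h x = 0 := by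
    have heq : ∫ x : ℝ, h x = (∫ x : ℝ, g x * φ x) - μg * ∫ x : ℝ, φ x := by
      rw [← integral_const_mul, ← integral_sub hgφint (int_phi.const_mul μg)]
      refine integral_congr_ae (Filter.Eventually.of_forall fun x => ?_)
      simp only [hh]; ring
    rw [heq, hμg]
    simp only [hφ]
    rw [phi_total, gaussMean_eq g hg]
    ring
  have habs' : ∀ s : Set ℝ, |∫ x in s, h x| ≤ M * ∫ x in s, φ x := by
    intro s
    calc |∫ x in s, h x| ≤ ∫ x in s, |h x| := by
          simpa [Real.norm_eq_abs] using
            norm_integral_le_integral_norm (μ := volume.restrict s) h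
      _ ≤ ∫ x in s, M * φ x := by
          refine integral_mono (hhint.abs.restrict) ((int_phi.const_mul M).restrict)
            (fun x => habsle x)
      _ = M * ∫ x in s, φ x := integral_const_mul _ _
  -- pointwise bound on |steinUo g t|
  have hptb : ∀ t : ℝ, |steinUo g t| ≤ Real.sqrt (Real.pi / 2) * M := by
    intro t
    have habs : |∫ x in Set.Iic t, h x| ≤ Real.exp (-t ^ 2 / 2) * Real.sqrt (Real.pi / 2) * M := by
      rcases le_or_gt t 0 with ht | ht
      · refine le_trans (habs' (Set.Iic t)) ?_
        have h1 : (∫ x in Set.Iic t, φ x) ≤ Real.exp (-t ^ 2 / 2) * Real.sqrt (Real.pi / 2) := by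
          simp only [hφ]
          rw [phi_Iic]
          have := tail_bound (s := -t) (by linarith)
          rw [show (-t) ^ 2 = t ^ 2 by ring] at this
          exact this
        calc M * ∫ x in Set.Iic t, φ x
            ≤ M * (Real.exp (-t ^ 2 / 2) * Real.sqrt (Real.pi / 2)) :=
              mul_le_mul_of_nonneg_left h1 hM0
          _ = Real.exp (-t ^ 2 / 2) * Real.sqrt (Real.pi / 2) * M := by ring
      · have hsplit : (∫ x in Set.Iic t, h x) = - ∫ x in Set.Ioi t, h x := by
          have := intervalIntegral.integral_Iic_add_Ioi (μ := volume) (b := t)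
            hhint.integrableOn hhint.integrableOn
          rw [htotal] at this
          linarith
        rw [hsplit, abs_neg]
        refine le_trans (habs' (Set.Ioi t)) ?_
        have h1 : (∫ x in Set.Ioi t, φ x) ≤ Real.exp (-t ^ 2 / 2) * Real.sqrt (Real.pi / 2) := by
          simp only [hφ]
          exact tail_bound ht.le
        calc M * ∫ x in Set.Ioi t, φ x
            ≤ M * (Real.exp (-t ^ 2 / 2) * Real.sqrt (Real.pi / 2)) :=
              mul_le_mul_of_nonneg_left h1 hM0
          _ = Real.exp (-t ^ 2 / 2) * Real.sqrt (Real.pi / 2) * M := by ring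
    have hrw : |steinUo g t| = Real.exp (t ^ 2 / 2) * |∫ x in Set.Iic t, h x| := by
      rw [steinUo, abs_mul, abs_of_pos (Real.exp_pos _)]
    rw [hrw]
    calc Real.exp (t ^ 2 / 2) * |∫ x in Set.Iic t, h x|
        ≤ Real.exp (t ^ 2 / 2) * (Real.exp (-t ^ 2 / 2) * Real.sqrt (Real.pi / 2) * M) :=
          mul_le_mul_of_nonneg_left habs (Real.exp_pos _).le
      _ = Real.sqrt (Real.pi / 2) * M := by
          rw [show Real.exp (t ^ 2 / 2) * (Real.exp (-t ^ 2 / 2) * Real.sqrt (Real.pi / 2) * M)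
            = (Real.exp (t ^ 2 / 2) * Real.exp (-t ^ 2 / 2)) * (Real.sqrt (Real.pi / 2) * M)
            by ring, ← Real.exp_add, show t ^ 2 / 2 + -t ^ 2 / 2 = 0 by ring,
            Real.exp_zero, one_mul]
  constructor
  · exact ciSup_le hptb
  · -- second inequality
    have hSbdd : BddAbove (Set.range fun x => |g x|) := ⟨C, by rintro _ ⟨x, rfl⟩; exact hC x⟩
    set S := ⨆ x : ℝ, |g x| with hS
    have hleS : ∀ x, |g x| ≤ S := fun x => le_ciSup hSbdd x
    have hS0 : 0 ≤ S := le_trans (abs_nonneg _) (hleS 0)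
    have hμS : |μg| ≤ S := by
      have : ‖∫ x, g x ∂(gaussianReal 0 1)‖ ≤ S * ((gaussianReal 0 1) Set.univ).toReal :=
        norm_integral_le_of_norm_le_const (ae_of_all _ fun x => by
          rw [Real.norm_eq_abs]; exact hleS x)
      simpa [hμg, gaussMean] using this
    have hM2S : M ≤ 2 * S := by
      refine ciSup_le fun x => ?_
      calc |g x - μg| ≤ |g x| + |μg| := abs_sub _ _
        _ ≤ 2 * S := by linarith [hleS x]
    have hsqrt : Real.sqrt (2 * Real.pi) = 2 * Real.sqrt (Real.pi / 2) := by
      rw [show (2:ℝ) * Real.pi = 2^2 * (Real.pi / 2) by ring,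
        Real.sqrt_mul (by positivity), Real.sqrt_sq (by norm_num)]
    rw [hsqrt]
    calc Real.sqrt (Real.pi / 2) * M ≤ Real.sqrt (Real.pi / 2) * (2 * S) :=
          mul_le_mul_of_nonneg_left hM2S (Real.sqrt_nonneg _)
      _ = 2 * Real.sqrt (Real.pi / 2) * S := by ring
end

section
/- Let Z be a standard normal random variable, let g : ℝ → ℝ be a bounded continuously differentiable function with bounded derivative, and let U_o g (t) = e^{t²/2} ∫_{−∞}^{t} [g(x) − E g(Z)] e^{−x²/2} dx. Then U_o g is twice differentiable and ‖(U_o g)″‖_∞ ≤ 2 ‖g′‖_∞. -/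
open MeasureTheory ProbabilityTheory

/-! Differentiating `U = U_o g` gives `U' = t U + (g - E g(Z))` and
`U'' = (1 + t²) U + t (g - E g(Z)) + g'`, so it suffices to bound
`|(1 + t²) U(t) + t (g(t) - E g(Z))|` by `‖g'‖_∞`. With `φ(x) = e^{-x²/2}`, let `G`, `Q` be
the integrals of `φ` over `x ≤ t` and `x > t`, and `A`, `B` those of `(g(x) - g(t)) φ(x)`.
Then `A + B = √(2π) (E g(Z) - g(t))`, and `√(2π)` times the quantity to bound equals
`a A - b B` with `a = (1 + t²) e^{t²/2} Q - t` and `b = (1 + t²) e^{t²/2} G + t`, both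
nonnegative by Mills' ratio `t φ(t) ≤ (1 + t²) Q`. Since `g` is `‖g'‖_∞`-Lipschitz, `|A|` and
`|B|` are at most `‖g'‖_∞` times the first absolute moments of `φ` about `t` on the two
half-lines, and the resulting bound `a (t G + φ(t)) + b (φ(t) - t Q)` is exactly `√(2π)`. -/

open Real Set Filter Topology
open scoped NNReal

noncomputable def gaussWeight (x : ℝ) : ℝ := exp (-x ^ 2 / 2)

lemma gaussWeight_eq_exp_neg_mul_sq : gaussWeight = fun x ↦ exp (-(1 / 2) * x ^ 2) := by
  ext x; rw [gaussWeight]; ring_nf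

lemma gaussWeight_pos (x : ℝ) : 0 < gaussWeight x := exp_pos _

@[fun_prop]
lemma continuous_gaussWeight : Continuous gaussWeight := by unfold gaussWeight; fun_prop

lemma exp_mul_gaussWeight (t : ℝ) : exp (t ^ 2 / 2) * gaussWeight t = 1 := by
  rw [gaussWeight, ← exp_add, neg_div, add_neg_cancel, exp_zero]

lemma hasDerivAt_gaussWeight (x : ℝ) : HasDerivAt gaussWeight (-x * gaussWeight x) x := by
  convert ((hasDerivAt_pow 2 x).neg.div_const 2).exp using 1
  · ext; simp [gaussWeight]
  · simp [gaussWeight]; ring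

lemma integrable_gaussWeight : Integrable gaussWeight := by
  rw [gaussWeight_eq_exp_neg_mul_sq]; exact integrable_exp_neg_mul_sq (by norm_num)

lemma integrable_mul_gaussWeight : Integrable fun x ↦ x * gaussWeight x := by
  rw [gaussWeight_eq_exp_neg_mul_sq]; exact integrable_mul_exp_neg_mul_sq (by norm_num)

lemma integral_gaussWeight : ∫ x, gaussWeight x = √(2 * π) := by
  rw [gaussWeight_eq_exp_neg_mul_sq, integral_gaussian]; congr 1; field_simp

lemma tendsto_gaussWeight_cocompact : Tendsto gaussWeight (cocompact ℝ) (𝓝 0) := by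
  have h : Tendsto (fun x : ℝ ↦ -‖x‖ ^ 2 / 2) (cocompact ℝ) atBot :=
    (tendsto_neg_atTop_atBot.comp
      ((tendsto_pow_atTop two_ne_zero).comp tendsto_norm_cocompact_atTop)).atBot_div_const two_pos
  exact (tendsto_exp_atBot.comp h).congr fun x ↦ by simp [gaussWeight]

lemma gaussWeight_neg (x : ℝ) : gaussWeight (-x) = gaussWeight x := by simp [gaussWeight]

lemma integral_Ioi_mul_gaussWeight (t : ℝ) : ∫ x in Ioi t, x * gaussWeight x = gaussWeight t := by
  have h := integral_Ioi_of_hasDerivAt_of_tendsto' (a := t) (f := fun x ↦ -gaussWeight x)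
    (f' := fun x ↦ x * gaussWeight x)
    (fun x _ ↦ (hasDerivAt_gaussWeight x).neg.congr_deriv (by ring))
    integrable_mul_gaussWeight.integrableOn
    (tendsto_gaussWeight_cocompact.mono_left atTop_le_cocompact).neg
  simpa using h

lemma integral_Iic_mul_gaussWeight (t : ℝ) :
    ∫ x in Iic t, x * gaussWeight x = -gaussWeight t := by
  have h := integral_Iic_of_hasDerivAt_of_tendsto' (a := t) (f' := fun x ↦ -(x * gaussWeight x))
    (fun x _ ↦ (hasDerivAt_gaussWeight x).congr_deriv (neg_mul _ _))
    integrable_mul_gaussWeight.neg.integrableOn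
    (tendsto_gaussWeight_cocompact.mono_left atBot_le_cocompact)
  rw [integral_neg, sub_zero] at h
  rw [← h, neg_neg]

lemma integral_Iic_abs_sub_mul_gaussWeight (t : ℝ) :
    ∫ x in Iic t, |x - t| * gaussWeight x = t * (∫ x in Iic t, gaussWeight x) + gaussWeight t := by
  rw [setIntegral_congr_fun measurableSet_Iic
      (g := fun x ↦ t * gaussWeight x - x * gaussWeight x) fun x hx ↦ by
        rw [abs_of_nonpos (sub_nonpos.2 (mem_Iic.1 hx))]; ring,
    integral_sub (integrable_gaussWeight.const_mul t).integrableOn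
      integrable_mul_gaussWeight.integrableOn,
    integral_const_mul, integral_Iic_mul_gaussWeight, sub_neg_eq_add]

lemma integral_Ioi_abs_sub_mul_gaussWeight (t : ℝ) :
    ∫ x in Ioi t, |x - t| * gaussWeight x = gaussWeight t - t * ∫ x in Ioi t, gaussWeight x := by
  rw [setIntegral_congr_fun measurableSet_Ioi
      (g := fun x ↦ x * gaussWeight x - t * gaussWeight x) fun x hx ↦ by
        rw [abs_of_pos (sub_pos.2 (mem_Ioi.1 hx))]; ring,
    integral_sub integrable_mul_gaussWeight.integrableOn
      (integrable_gaussWeight.const_mul t).integrableOn,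
    integral_const_mul, integral_Ioi_mul_gaussWeight]

lemma integrable_abs_sub_mul_gaussWeight (t : ℝ) :
    Integrable fun x ↦ |x - t| * gaussWeight x :=
  (integrable_mul_gaussWeight.sub (integrable_gaussWeight.const_mul t)).abs.congr
    (.of_forall fun x ↦ by simp [← sub_mul, abs_mul, abs_of_pos (gaussWeight_pos x)])

lemma mul_gaussWeight_le_integral_Ioi (t : ℝ) :
    t * gaussWeight t ≤ (1 + t ^ 2) * ∫ x in Ioi t, gaussWeight x := by
  have hpos (x : ℝ) : 0 < 1 + x ^ 2 := by positivity
  have hφ (x : ℝ) := gaussWeight_pos x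
  have hF (x : ℝ) : HasDerivAt (fun x ↦ -(x / (1 + x ^ 2) * gaussWeight x))
      (gaussWeight x - 2 * gaussWeight x / (1 + x ^ 2) ^ 2) x := by
    have h := ((hasDerivAt_id' x).div ((hasDerivAt_pow 2 x).const_add 1) (hpos x).ne').mul
      (hasDerivAt_gaussWeight x)
    refine h.neg.congr_deriv ?_
    simp only [Pi.div_apply]
    field_simp
    ring
  have hc_int : Integrable fun x ↦ 2 * gaussWeight x / (1 + x ^ 2) ^ 2 := by
    refine (integrable_gaussWeight.const_mul 2).mono'
      (((continuous_gaussWeight.const_mul 2).div (by fun_prop)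
        fun x ↦ (pow_pos (hpos x) 2).ne').aestronglyMeasurable) (.of_forall fun x ↦ ?_)
    rw [Real.norm_of_nonneg (by have := hφ x; positivity)]
    exact div_le_self (by linarith [hφ x]) (one_le_pow₀ (by nlinarith))
  have hF_tendsto : Tendsto (fun x ↦ -(x / (1 + x ^ 2) * gaussWeight x)) atTop (𝓝 0) := by
    refine squeeze_zero_norm (fun x ↦ ?_)
      (tendsto_gaussWeight_cocompact.mono_left atTop_le_cocompact)
    rw [norm_neg, norm_mul, Real.norm_of_nonneg (hφ x).le, norm_div,
      Real.norm_of_nonneg (hpos x).le, Real.norm_eq_abs]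
    refine mul_le_of_le_one_left (hφ x).le ((div_le_one (hpos x)).2 ?_)
    nlinarith [abs_nonneg x, sq_abs x]
  have h := integral_Ioi_of_hasDerivAt_of_tendsto' (a := t) (fun x _ ↦ hF x)
    (integrable_gaussWeight.sub hc_int).integrableOn hF_tendsto
  rw [integral_sub integrable_gaussWeight.integrableOn hc_int.integrableOn] at h
  have hc_nonneg : 0 ≤ ∫ x in Ioi t, 2 * gaussWeight x / (1 + x ^ 2) ^ 2 :=
    setIntegral_nonneg measurableSet_Ioi fun x _ ↦ by have := hφ x; positivity
  calc t * gaussWeight t = (1 + t ^ 2) * (t / (1 + t ^ 2) * gaussWeight t) := by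
        field_simp
    _ ≤ (1 + t ^ 2) * ∫ x in Ioi t, gaussWeight x := by gcongr; linarith

lemma neg_mul_gaussWeight_le_integral_Iic (t : ℝ) :
    -t * gaussWeight t ≤ (1 + t ^ 2) * ∫ x in Iic t, gaussWeight x := by
  simpa [← integral_comp_neg_Iic, gaussWeight_neg] using mul_gaussWeight_le_integral_Ioi (-t)

lemma hasDerivAt_integral_Iic {E : Type*} [NormedAddCommGroup E] [NormedSpace ℝ E]
    [CompleteSpace E] {f : ℝ → E} (hf : Continuous f) (hfi : Integrable f) (t : ℝ) :
    HasDerivAt (fun t ↦ ∫ x in Iic t, f x) (f t) t := by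
  have h : (fun t ↦ ∫ x in Iic t, f x) = fun t ↦ (∫ x in Iic 0, f x) + ∫ x in 0..t, f x := by
    ext s
    rw [← intervalIntegral.integral_Iic_sub_Iic hfi.integrableOn hfi.integrableOn,
      add_sub_cancel]
  rw [h]
  exact (intervalIntegral.integral_hasDerivAt_right hfi.intervalIntegrable
    (hf.stronglyMeasurableAtFilter _ _) hf.continuousAt).const_add _

section Lipschitz

variable {g : ℝ → ℝ} {K : ℝ≥0}

lemma LipschitzWith.integrable_mul_gaussWeight (hg : LipschitzWith K g) :
    Integrable fun x ↦ g x * gaussWeight x := by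
  refine ((integrable_gaussWeight.const_mul |g 0|).add
    ((integrable_abs_sub_mul_gaussWeight 0).const_mul K)).mono'
    (hg.continuous.mul continuous_gaussWeight).aestronglyMeasurable (.of_forall fun x ↦ ?_)
  have hφ := gaussWeight_pos x
  have hgx : |g x| ≤ |g 0| + K * |x - 0| := by
    have := hg.dist_le_mul x 0
    rw [Real.dist_eq, Real.dist_eq] at this
    linarith [abs_sub_abs_le_abs_sub (g x) (g 0)]
  rw [Real.norm_eq_abs, abs_mul, abs_of_pos hφ, Pi.add_apply]
  nlinarith

lemma LipschitzWith.abs_setIntegral_sub_mul_gaussWeight_le (hg : LipschitzWith K g)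
    (s : Set ℝ) (t : ℝ) :
    |∫ x in s, (g x - g t) * gaussWeight x| ≤ K * ∫ x in s, |x - t| * gaussWeight x := by
  rw [← integral_const_mul, ← Real.norm_eq_abs]
  refine norm_integral_le_of_norm_le
    ((integrable_abs_sub_mul_gaussWeight t).const_mul K).integrableOn (.of_forall fun x ↦ ?_)
  rw [Real.norm_eq_abs, abs_mul, abs_of_pos (gaussWeight_pos x), ← mul_assoc]
  exact mul_le_mul_of_nonneg_right (by simpa [Real.dist_eq] using hg.dist_le_mul x t)
    (gaussWeight_pos x).le

end Lipschitz

section Stein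

variable {g : ℝ → ℝ}

lemma gaussMean_eq_s9 : gaussMean g = (∫ x, g x * gaussWeight x) / √(2 * π) := by
  rw [gaussMean, integral_gaussianReal_eq_integral_smul one_ne_zero, div_eq_inv_mul,
    ← integral_const_mul]
  congr 1 with x
  simp [gaussianPDFReal, gaussWeight]; ring

lemma steinUo_eq :
    steinUo g = fun t ↦ exp (t ^ 2 / 2) * ∫ x in Iic t, (g x - gaussMean g) * gaussWeight x :=
  rfl

lemma integrable_sub_const_mul_gaussWeight (hgi : Integrable fun x ↦ g x * gaussWeight x)
    (c : ℝ) :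
    Integrable fun x ↦ (g x - c) * gaussWeight x :=
  (hgi.sub (integrable_gaussWeight.const_mul c)).congr (.of_forall fun _ ↦ (sub_mul ..).symm)

lemma integral_sub_const_mul_gaussWeight (hgi : Integrable fun x ↦ g x * gaussWeight x)
    (c : ℝ) :
    ∫ x, (g x - c) * gaussWeight x = √(2 * π) * (gaussMean g - c) := by
  simp_rw [sub_mul]
  rw [integral_sub hgi (integrable_gaussWeight.const_mul c), integral_const_mul,
    integral_gaussWeight, gaussMean_eq_s9]
  field_simp

lemma steinUo_eq_exp_mul_add (hgi : Integrable fun x ↦ g x * gaussWeight x) (t : ℝ) :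
    steinUo g t = exp (t ^ 2 / 2) * ((∫ x in Iic t, (g x - g t) * gaussWeight x) +
      (g t - gaussMean g) * ∫ x in Iic t, gaussWeight x) := by
  simp only [steinUo_eq]
  rw [← integral_const_mul (g t - gaussMean g),
    ← integral_add (integrable_sub_const_mul_gaussWeight hgi _).integrableOn
      (integrable_gaussWeight.const_mul _).integrableOn]
  congr 1
  exact integral_congr_ae (.of_forall fun x ↦ by ring)

lemma hasDerivAt_steinUo (hg : Continuous g) (hgi : Integrable fun x ↦ g x * gaussWeight x)
    (t : ℝ) : HasDerivAt (steinUo g) (t * steinUo g t + (g t - gaussMean g)) t := by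
  have hI := hasDerivAt_integral_Iic (f := fun x ↦ (g x - gaussMean g) * gaussWeight x)
    (by fun_prop) (integrable_sub_const_mul_gaussWeight hgi _) t
  refine (((hasDerivAt_pow 2 t).div_const 2).exp.mul hI).congr_deriv ?_
  rw [steinUo_eq]
  linear_combination (g t - gaussMean g) * exp_mul_gaussWeight t

lemma hasDerivAt_deriv_steinUo (hg : Differentiable ℝ g)
    (hgi : Integrable fun x ↦ g x * gaussWeight x) (t : ℝ) :
    HasDerivAt (deriv (steinUo g))
      ((1 + t ^ 2) * steinUo g t + t * (g t - gaussMean g) + deriv g t) t := by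
  have h : deriv (steinUo g) = fun t ↦ t * steinUo g t + (g t - gaussMean g) :=
    funext fun t ↦ (hasDerivAt_steinUo hg.continuous hgi t).deriv
  rw [h]
  refine (((hasDerivAt_id t).mul (hasDerivAt_steinUo hg.continuous hgi t)).add
    ((hg t).hasDerivAt.sub_const _)).congr_deriv ?_
  simp only [id]
  ring

end Stein

theorem LipschitzWith.abs_one_add_sq_mul_steinUo_add_le {g : ℝ → ℝ} {K : ℝ≥0}
    (hg : LipschitzWith K g) (t : ℝ) :
    |(1 + t ^ 2) * steinUo g t + t * (g t - gaussMean g)| ≤ (K : ℝ) := by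
  have hgi := hg.integrable_mul_gaussWeight
  set m := gaussMean g
  set E := exp (t ^ 2 / 2)
  set G := ∫ x in Iic t, gaussWeight x
  set Q := ∫ x in Ioi t, gaussWeight x
  set S := √(2 * π)
  set A := ∫ x in Iic t, (g x - g t) * gaussWeight x
  set B := ∫ x in Ioi t, (g x - g t) * gaussWeight x
  have hS : 0 < S := by positivity
  have hE : 0 < E := exp_pos _
  have hEφ : E * gaussWeight t = 1 := exp_mul_gaussWeight t
  have hGQ : G + Q = S := by
    rw [intervalIntegral.integral_Iic_add_Ioi integrable_gaussWeight.integrableOn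
      integrable_gaussWeight.integrableOn, integral_gaussWeight]
  have hA : |A| ≤ K * (t * G + gaussWeight t) := by
    simpa only [integral_Iic_abs_sub_mul_gaussWeight] using
      hg.abs_setIntegral_sub_mul_gaussWeight_le (Iic t) t
  have hB : |B| ≤ K * (gaussWeight t - t * Q) := by
    simpa only [integral_Ioi_abs_sub_mul_gaussWeight] using
      hg.abs_setIntegral_sub_mul_gaussWeight_le (Ioi t) t
  have hAB : A + B = S * (m - g t) := by
    have hi := integrable_sub_const_mul_gaussWeight hgi (g t)
    rw [intervalIntegral.integral_Iic_add_Ioi hi.integrableOn hi.integrableOn,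
      integral_sub_const_mul_gaussWeight hgi]
  have ha : 0 ≤ (1 + t ^ 2) * E * Q - t := by
    linear_combination mul_le_mul_of_nonneg_left (mul_gaussWeight_le_integral_Ioi t) hE.le -
      t * hEφ
  have hb : 0 ≤ (1 + t ^ 2) * E * G + t := by
    linear_combination mul_le_mul_of_nonneg_left (neg_mul_gaussWeight_le_integral_Iic t) hE.le +
      t * hEφ
  have hrepr : S * ((1 + t ^ 2) * steinUo g t + t * (g t - m)) =
      ((1 + t ^ 2) * E * Q - t) * A - ((1 + t ^ 2) * E * G + t) * B := by
    rw [steinUo_eq_exp_mul_add hgi]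
    linear_combination ((1 + t ^ 2) * E * G + t) * hAB - (1 + t ^ 2) * E * A * hGQ
  have hsum : ((1 + t ^ 2) * E * Q - t) * (t * G + gaussWeight t) +
      ((1 + t ^ 2) * E * G + t) * (gaussWeight t - t * Q) = S := by
    linear_combination (1 + t ^ 2) * (G + Q) * hEφ + hGQ
  refine le_of_mul_le_mul_left ?_ hS
  calc S * |(1 + t ^ 2) * steinUo g t + t * (g t - m)|
      = |((1 + t ^ 2) * E * Q - t) * A - ((1 + t ^ 2) * E * G + t) * B| := by
        rw [← hrepr, abs_mul, abs_of_pos hS]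
    _ ≤ ((1 + t ^ 2) * E * Q - t) * |A| + ((1 + t ^ 2) * E * G + t) * |B| := by
        grw [abs_sub, abs_mul, abs_mul, abs_of_nonneg ha, abs_of_nonneg hb]
    _ ≤ ((1 + t ^ 2) * E * Q - t) * (K * (t * G + gaussWeight t)) +
        ((1 + t ^ 2) * E * G + t) * (K * (gaussWeight t - t * Q)) := by gcongr
    _ = S * K := by linear_combination (K : ℝ) * hsum

theorem steinUo_second_deriv_sup_norm_bound_general
    (g : ℝ → ℝ) (hg : ContDiff ℝ 1 g)
    (hgb' : ∃ C : ℝ, ∀ x : ℝ, |deriv g x| ≤ C) :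
    Differentiable ℝ (steinUo g) ∧
    Differentiable ℝ (deriv (steinUo g)) ∧
    (⨆ t : ℝ, |deriv (deriv (steinUo g)) t|) ≤ 2 * (⨆ x : ℝ, |deriv g x|) := by
  obtain ⟨C, hC⟩ := hgb'
  have hgd : Differentiable ℝ g := hg.differentiable one_ne_zero
  set L := ⨆ x, |deriv g x|
  have hL (x : ℝ) : |deriv g x| ≤ L := le_ciSup ⟨C, forall_mem_range.2 hC⟩ x
  have hL₀ : 0 ≤ L := (abs_nonneg _).trans (hL 0)
  have hLip : LipschitzWith L.toNNReal g := lipschitzWith_of_nnnorm_deriv_le hgd fun x ↦ by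
    rw [← NNReal.coe_le_coe, coe_nnnorm, Real.coe_toNNReal _ hL₀]
    exact hL x
  have hgi := hLip.integrable_mul_gaussWeight
  have hU'' := hasDerivAt_deriv_steinUo hgd hgi
  refine ⟨fun t ↦ (hasDerivAt_steinUo hgd.continuous hgi t).differentiableAt,
    fun t ↦ (hU'' t).differentiableAt, ciSup_le fun t ↦ ?_⟩
  rw [(hU'' t).deriv, two_mul]
  refine (abs_add_le _ _).trans (add_le_add ?_ (hL t))
  simpa [Real.coe_toNNReal _ hL₀] using hLip.abs_one_add_sq_mul_steinUo_add_le t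

/-- For `g` bounded `C¹` with bounded derivative, `U_o g` is twice
differentiable and `‖(U_o g)''‖_∞ ≤ 2 ‖g'‖_∞`. -/
theorem steinUo_second_deriv_sup_norm_bound
    (g : ℝ → ℝ) (hg : ContDiff ℝ 1 g)
    (hgb : ∃ C : ℝ, ∀ x : ℝ, |g x| ≤ C)
    (hgb' : ∃ C : ℝ, ∀ x : ℝ, |deriv g x| ≤ C) :
    Differentiable ℝ (steinUo g) ∧
    Differentiable ℝ (deriv (steinUo g)) ∧
    (⨆ t : ℝ, |deriv (deriv (steinUo g)) t|) ≤ 2 * (⨆ x : ℝ, |deriv g x|) :=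
  steinUo_second_deriv_sup_norm_bound_general g hg hgb'
end

section
/- Let n ≥ 2 and let H = (h_{ij}) be a random matrix in the orthogonal group O(n) distributed according to Haar probability measure. Then for all indices i, i′, j, j′ with i′ ≠ i and j′ ≠ j, E[(h_{i1} h_{i′2} − h_{i2} h_{i′1})(h_{j1} h_{j′2} − h_{j2} h_{j′1})] = (2/(n(n−1))) · [δ_{ij} δ_{i′j′} − δ_{ij′} δ_{ji′}]. -/
open MeasureTheory ProbabilityTheory Matrix

noncomputable instance {n : ℕ} : MeasurableSpace (Matrix.orthogonalGroup (Fin n) ℝ) :=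
  borel _

instance {n : ℕ} : BorelSpace (Matrix.orthogonalGroup (Fin n) ℝ) := ⟨rfl⟩

namespace HaarFourth

variable {n : ℕ}

local notation "G" => Matrix.orthogonalGroup (Fin n) ℝ

lemma continuous_entry (a k : Fin n) :
    Continuous fun H : G => (H : Matrix (Fin n) (Fin n) ℝ) a k :=
  by exact Continuous.comp (continuous_apply k) (Continuous.comp (continuous_apply a) continuous_subtype_val)

lemma col_orth (H : G) (c k : Fin n) :
    ∑ l, (H : Matrix (Fin n) (Fin n) ℝ) l c * (H : Matrix (Fin n) (Fin n) ℝ) l k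
      = if c = k then 1 else 0 := by
  have h := H.2.1
  have h' : (star (H : Matrix (Fin n) (Fin n) ℝ) * (H : Matrix (Fin n) (Fin n) ℝ)) c k
      = (1 : Matrix (Fin n) (Fin n) ℝ) c k := by rw [h]
  simpa [Matrix.mul_apply, Matrix.one_apply, Matrix.star_apply] using h'

lemma entry_abs_le (H : G) (a k : Fin n) : |(H : Matrix (Fin n) (Fin n) ℝ) a k| ≤ 1 := by
  have h := col_orth H k k
  rw [if_pos rfl] at h
  have h2 : ((H : Matrix (Fin n) (Fin n) ℝ) a k) * ((H : Matrix (Fin n) (Fin n) ℝ) a k) ≤ 1 := by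
    rw [← h]
    exact Finset.single_le_sum (f := fun l => (H : Matrix (Fin n) (Fin n) ℝ) l k * (H : Matrix (Fin n) (Fin n) ℝ) l k) (fun l _ => mul_self_nonneg _) (Finset.mem_univ a)
  nlinarith [abs_nonneg ((H : Matrix (Fin n) (Fin n) ℝ) a k), sq_abs ((H : Matrix (Fin n) (Fin n) ℝ) a k)]

/-- The 2×2 minor of rows `a,b` and columns `c0,c1`. -/
def D (c0 c1 a b : Fin n) (H : G) : ℝ :=
  (H : Matrix (Fin n) (Fin n) ℝ) a c0 * (H : Matrix (Fin n) (Fin n) ℝ) b c1 -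
    (H : Matrix (Fin n) (Fin n) ℝ) a c1 * (H : Matrix (Fin n) (Fin n) ℝ) b c0

lemma continuous_D (c0 c1 a b : Fin n) : Continuous (D c0 c1 a b) :=
  ((continuous_entry a c0).mul (continuous_entry b c1)).sub
    ((continuous_entry a c1).mul (continuous_entry b c0))

lemma abs_D_le (c0 c1 a b : Fin n) (H : G) : |D c0 c1 a b H| ≤ 2 := by
  have h1 := entry_abs_le H a c0
  have h2 := entry_abs_le H b c1
  have h3 := entry_abs_le H a c1
  have h4 := entry_abs_le H b c0
  have e1 : |(H : Matrix (Fin n) (Fin n) ℝ) a c0 * (H : Matrix (Fin n) (Fin n) ℝ) b c1| ≤ 1 := by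
    rw [abs_mul]; nlinarith [abs_nonneg ((H : Matrix (Fin n) (Fin n) ℝ) a c0)]
  have e2 : |(H : Matrix (Fin n) (Fin n) ℝ) a c1 * (H : Matrix (Fin n) (Fin n) ℝ) b c0| ≤ 1 := by
    rw [abs_mul]; nlinarith [abs_nonneg ((H : Matrix (Fin n) (Fin n) ℝ) a c1)]
  calc |D c0 c1 a b H| ≤ _ + _ := abs_sub _ _
    _ ≤ 2 := by linarith

lemma integrable_D_mul_D (c0 c1 a b p q : Fin n) (μ : Measure G) [IsFiniteMeasure μ] :
    Integrable (fun H => D c0 c1 a b H * D c0 c1 p q H) μ := by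
  apply Integrable.mono' (integrable_const (4 : ℝ))
  · exact ((continuous_D c0 c1 a b).mul (continuous_D c0 c1 p q)).aestronglyMeasurable
  · filter_upwards with H
    have h1 := abs_D_le c0 c1 a b H
    have h2 := abs_D_le c0 c1 p q H
    rw [Real.norm_eq_abs, abs_mul]
    nlinarith [abs_nonneg (D c0 c1 a b H), abs_nonneg (D c0 c1 p q H)]

/-- sign vector flipping coordinate `k₀`. -/
def sgn (k₀ a : Fin n) : ℝ := if a = k₀ then -1 else 1

lemma sgn_mul_self (k₀ a : Fin n) : sgn k₀ a * sgn k₀ a = 1 := by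
  unfold sgn; split <;> norm_num

/-- The sign-flip matrix as an element of the orthogonal group. -/
def flip (k₀ : Fin n) : G :=
  ⟨Matrix.diagonal (sgn k₀), by
    have hs : star (Matrix.diagonal (sgn k₀)) = Matrix.diagonal (sgn k₀) := by
      simp [Matrix.star_eq_conjTranspose, Matrix.diagonal_conjTranspose]
    have hd : Matrix.diagonal (sgn k₀) * Matrix.diagonal (sgn k₀)
        = (1 : Matrix (Fin n) (Fin n) ℝ) := by
      rw [Matrix.diagonal_mul_diagonal,
        show (fun i => sgn k₀ i * sgn k₀ i) = fun _ => (1 : ℝ) from funext (sgn_mul_self k₀),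
        Matrix.diagonal_one]
    exact ⟨by rw [hs, hd], by rw [hs, hd]⟩⟩

lemma flip_entry (k₀ : Fin n) (H : G) (a c : Fin n) :
    ((flip k₀ * H : G) : Matrix (Fin n) (Fin n) ℝ) a c
      = sgn k₀ a * (H : Matrix (Fin n) (Fin n) ℝ) a c := by
  show (Matrix.diagonal (sgn k₀) * (H : Matrix (Fin n) (Fin n) ℝ)) a c = _
  rw [Matrix.diagonal_mul]

lemma D_flip (k₀ c0 c1 a b : Fin n) (H : G) :
    D c0 c1 a b (flip k₀ * H) = sgn k₀ a * sgn k₀ b * D c0 c1 a b H := by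
  unfold D
  rw [flip_entry, flip_entry, flip_entry, flip_entry]
  ring

/-- A permutation matrix as an element of the orthogonal group. -/
def permG (σ : Equiv.Perm (Fin n)) : G :=
  ⟨σ.permMatrix ℝ, by
    have hs : star (σ.permMatrix ℝ) = (σ⁻¹).permMatrix ℝ := by
      simp [Matrix.star_eq_conjTranspose, Equiv.Perm.permMatrix,
        ← PEquiv.toMatrix_symm, ← Equiv.toPEquiv_symm]
      rfl
    have h1 : (σ⁻¹).permMatrix ℝ * σ.permMatrix ℝ = 1 := by
      ext a b
      rw [PEquiv.toMatrix_toPEquiv_mul]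
      simp [Matrix.submatrix_apply, PEquiv.toMatrix_apply, Equiv.toPEquiv_apply,
        Matrix.one_apply, eq_comm]
    have h2 : σ.permMatrix ℝ * (σ⁻¹).permMatrix ℝ = 1 := by
      ext a b
      rw [PEquiv.toMatrix_toPEquiv_mul]
      simp [Matrix.submatrix_apply, PEquiv.toMatrix_apply, Equiv.toPEquiv_apply,
        Matrix.one_apply, eq_comm]
    exact ⟨by rw [hs, h1], by rw [hs, h2]⟩⟩

lemma perm_entry (σ : Equiv.Perm (Fin n)) (H : G) (a c : Fin n) :
    ((permG σ * H : G) : Matrix (Fin n) (Fin n) ℝ) a c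
      = (H : Matrix (Fin n) (Fin n) ℝ) (σ a) c := by
  show ((σ.permMatrix ℝ) * (H : Matrix (Fin n) (Fin n) ℝ)) a c = _
  rw [PEquiv.toMatrix_toPEquiv_mul]
  rfl

lemma D_perm (σ : Equiv.Perm (Fin n)) (c0 c1 a b : Fin n) (H : G) :
    D c0 c1 a b (permG σ * H) = D c0 c1 (σ a) (σ b) H := by
  unfold D
  rw [perm_entry, perm_entry, perm_entry, perm_entry]

lemma exists_perm (a b p q : Fin n) (hab : a ≠ b) (hpq : p ≠ q) :
    ∃ σ : Equiv.Perm (Fin n), σ a = p ∧ σ b = q := by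
  refine ⟨(Equiv.swap a p).trans (Equiv.swap ((Equiv.swap a p) b) q), ?_, ?_⟩
  · simp only [Equiv.trans_apply, Equiv.swap_apply_left]
    have h1 : (Equiv.swap a p) b ≠ p := by
      intro h
      exact hab ((Equiv.swap a p).injective (by rw [h, Equiv.swap_apply_left])).symm
    rw [Equiv.swap_apply_of_ne_of_ne (Ne.symm h1) hpq]
  · simp only [Equiv.trans_apply, Equiv.swap_apply_left]

section Integral

variable (μ : Measure (Matrix.orthogonalGroup (Fin n) ℝ)) [μ.IsHaarMeasure]
  [IsProbabilityMeasure μ]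

lemma vanish (c0 c1 i i' j j' : Fin n) (k₀ : Fin n)
    (hodd : sgn k₀ i * sgn k₀ i' * (sgn k₀ j * sgn k₀ j') = -1) :
    ∫ H, D c0 c1 i i' H * D c0 c1 j j' H ∂μ = 0 := by
  have h : ∫ H, D c0 c1 i i' (flip k₀ * H) * D c0 c1 j j' (flip k₀ * H) ∂μ
      = ∫ H, D c0 c1 i i' H * D c0 c1 j j' H ∂μ :=
    integral_mul_left_eq_self (fun H => D c0 c1 i i' H * D c0 c1 j j' H) (flip k₀)
  have e : (fun H => D c0 c1 i i' (flip k₀ * H) * D c0 c1 j j' (flip k₀ * H))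
      = fun H => (sgn k₀ i * sgn k₀ i' * (sgn k₀ j * sgn k₀ j')) *
        (D c0 c1 i i' H * D c0 c1 j j' H) := funext fun H => by
    rw [D_flip, D_flip]; ring
  rw [e, integral_const_mul, hodd] at h
  linarith

lemma perm_invariant (c0 c1 a b p q : Fin n) (hab : a ≠ b) (hpq : p ≠ q) :
    ∫ H, D c0 c1 a b H * D c0 c1 a b H ∂μ = ∫ H, D c0 c1 p q H * D c0 c1 p q H ∂μ := by
  obtain ⟨σ, h1, h2⟩ := exists_perm p q a b hpq hab
  have h : ∫ H, D c0 c1 p q (permG σ * H) * D c0 c1 p q (permG σ * H) ∂μ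
      = ∫ H, D c0 c1 p q H * D c0 c1 p q H ∂μ :=
    integral_mul_left_eq_self (fun H => D c0 c1 p q H * D c0 c1 p q H) (permG σ)
  have e : (fun H => D c0 c1 p q (permG σ * H) * D c0 c1 p q (permG σ * H))
      = fun H => D c0 c1 a b H * D c0 c1 a b H := funext fun H => by
    rw [D_perm, h1, h2]
  rw [e] at h
  exact h

lemma sum_D_sq (c0 c1 : Fin n) (hc : c0 ≠ c1) (H : G) :
    ∑ a, ∑ b, D c0 c1 a b H * D c0 c1 a b H = 2 := by
  have h00 := col_orth H c0 c0
  have h11 := col_orth H c1 c1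
  have h01 := col_orth H c0 c1
  rw [if_pos rfl] at h00
  rw [if_pos rfl] at h11
  rw [if_neg hc] at h01
  have inner : ∀ a : Fin n, ∑ b, D c0 c1 a b H * D c0 c1 a b H
      = (H : Matrix (Fin n) (Fin n) ℝ) a c0 * (H : Matrix (Fin n) (Fin n) ℝ) a c0 *
          (∑ b, (H : Matrix (Fin n) (Fin n) ℝ) b c1 * (H : Matrix (Fin n) (Fin n) ℝ) b c1) +
        (H : Matrix (Fin n) (Fin n) ℝ) a c1 * (H : Matrix (Fin n) (Fin n) ℝ) a c1 *
          (∑ b, (H : Matrix (Fin n) (Fin n) ℝ) b c0 * (H : Matrix (Fin n) (Fin n) ℝ) b c0) -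
        2 * ((H : Matrix (Fin n) (Fin n) ℝ) a c0 * (H : Matrix (Fin n) (Fin n) ℝ) a c1) *
          (∑ b, (H : Matrix (Fin n) (Fin n) ℝ) b c0 * (H : Matrix (Fin n) (Fin n) ℝ) b c1) := by
    intro a
    rw [Finset.mul_sum, Finset.mul_sum, Finset.mul_sum, ← Finset.sum_add_distrib,
      ← Finset.sum_sub_distrib]
    exact Finset.sum_congr rfl fun b _ => by unfold D; ring
  calc ∑ a, ∑ b, D c0 c1 a b H * D c0 c1 a b H
      = ∑ a, ((H : Matrix (Fin n) (Fin n) ℝ) a c0 * (H : Matrix (Fin n) (Fin n) ℝ) a c0 +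
          (H : Matrix (Fin n) (Fin n) ℝ) a c1 * (H : Matrix (Fin n) (Fin n) ℝ) a c1) :=
        Finset.sum_congr rfl fun a _ => by rw [inner a, h00, h11, h01]; ring
    _ = 1 + 1 := by rw [Finset.sum_add_distrib, h00, h11]
    _ = 2 := by norm_num

section Value

variable (μ : Measure (Matrix.orthogonalGroup (Fin n) ℝ)) [μ.IsHaarMeasure]
  [IsProbabilityMeasure μ]

lemma int_D_sq (c0 c1 : Fin n) (hc : c0 ≠ c1) (a b : Fin n) (hab : a ≠ b) :
    ∫ H, D c0 c1 a b H * D c0 c1 a b H ∂μ = 2 / ((n : ℝ) * ((n : ℝ) - 1)) := by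
  have hn : 2 ≤ n := by
    by_contra hlt
    interval_cases n
    · exact absurd a.2 (by omega)
    · exact hab (Subsingleton.elim a b)
  set I := ∫ H, D c0 c1 a b H * D c0 c1 a b H ∂μ with hI
  have hsum : ∑ p : Fin n, ∑ q : Fin n, (∫ H, D c0 c1 p q H * D c0 c1 p q H ∂μ) = 2 := by
    have step1 : ∀ p : Fin n, ∑ q : Fin n, (∫ H, D c0 c1 p q H * D c0 c1 p q H ∂μ)
        = ∫ H, ∑ q : Fin n, D c0 c1 p q H * D c0 c1 p q H ∂μ := fun p =>
      (integral_finset_sum _ fun q _ => integrable_D_mul_D c0 c1 p q p q μ).symm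
    calc ∑ p : Fin n, ∑ q : Fin n, (∫ H, D c0 c1 p q H * D c0 c1 p q H ∂μ)
        = ∑ p : Fin n, ∫ H, ∑ q : Fin n, D c0 c1 p q H * D c0 c1 p q H ∂μ :=
          Finset.sum_congr rfl fun p _ => step1 p
      _ = ∫ H, ∑ p : Fin n, ∑ q : Fin n, D c0 c1 p q H * D c0 c1 p q H ∂μ :=
          (integral_finset_sum _ fun p _ =>
            integrable_finset_sum _ fun q _ => integrable_D_mul_D c0 c1 p q p q μ).symm
      _ = ∫ _H : Matrix.orthogonalGroup (Fin n) ℝ, (2 : ℝ) ∂μ := by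
          simp only [sum_D_sq c0 c1 hc]
      _ = 2 := by simp
  have each : ∀ p q : Fin n, (∫ H, D c0 c1 p q H * D c0 c1 p q H ∂μ)
      = if p = q then 0 else I := by
    intro p q
    by_cases h : p = q
    · subst h
      rw [if_pos rfl]
      have hz : ∀ H, D c0 c1 p p H = 0 := fun H => by unfold D; ring
      simp [hz]
    · rw [if_neg h]
      exact perm_invariant μ c0 c1 p q a b h hab
  rw [Finset.sum_congr rfl (fun p _ => Finset.sum_congr rfl fun q _ => each p q)] at hsum
  have row : ∀ p : Fin n, ∑ q : Fin n, (if p = q then (0:ℝ) else I) = (n : ℝ) * I - I := by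
    intro p
    calc ∑ q : Fin n, (if p = q then (0:ℝ) else I)
        = ∑ q : Fin n, (I - if p = q then I else 0) :=
          Finset.sum_congr rfl fun q _ => by split <;> ring
      _ = (n : ℝ) * I - I := by
          rw [Finset.sum_sub_distrib, Finset.sum_const, Finset.sum_ite_eq]
          simp [mul_comm]
  rw [Finset.sum_congr rfl fun p _ => row p, Finset.sum_const] at hsum
  simp only [Finset.card_univ, Fintype.card_fin, nsmul_eq_mul] at hsum
  have hne : (n : ℝ) * ((n : ℝ) - 1) ≠ 0 := by
    have h2 : (2 : ℝ) ≤ (n : ℝ) := by exact_mod_cast hn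
    nlinarith
  rw [eq_div_iff hne]
  linear_combination hsum

end Value

end Integral

end HaarFourth

open HaarFourth

/-- Fourth-moment identity for the first two columns of a Haar-distributed
orthogonal matrix: for `i' ≠ i` and `j' ≠ j`,
`E[(h_{i1} h_{i'2} - h_{i2} h_{i'1})(h_{j1} h_{j'2} - h_{j2} h_{j'1})]
  = (2/(n(n-1))) (δ_{ij} δ_{i'j'} - δ_{ij'} δ_{ji'})`. -/
theorem haar_orthogonal_fourth_moments (n : ℕ) (hn : 2 ≤ n)
    (μ : Measure (Matrix.orthogonalGroup (Fin n) ℝ))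
    [μ.IsHaarMeasure] [IsProbabilityMeasure μ]
    (i i' j j' : Fin n) (hi : i' ≠ i) (hj : j' ≠ j) :
    (∫ H : Matrix.orthogonalGroup (Fin n) ℝ,
        (((H : Matrix (Fin n) (Fin n) ℝ) i ⟨0, by omega⟩ *
            (H : Matrix (Fin n) (Fin n) ℝ) i' ⟨1, by omega⟩ -
          (H : Matrix (Fin n) (Fin n) ℝ) i ⟨1, by omega⟩ *
            (H : Matrix (Fin n) (Fin n) ℝ) i' ⟨0, by omega⟩) *
         ((H : Matrix (Fin n) (Fin n) ℝ) j ⟨0, by omega⟩ *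
            (H : Matrix (Fin n) (Fin n) ℝ) j' ⟨1, by omega⟩ -
          (H : Matrix (Fin n) (Fin n) ℝ) j ⟨1, by omega⟩ *
            (H : Matrix (Fin n) (Fin n) ℝ) j' ⟨0, by omega⟩)) ∂μ)
      = (2 / ((n : ℝ) * ((n : ℝ) - 1))) *
          ((if i = j then (1 : ℝ) else 0) * (if i' = j' then (1 : ℝ) else 0) -
           (if i = j' then (1 : ℝ) else 0) * (if j = i' then (1 : ℝ) else 0)) := by
  set c0 : Fin n := ⟨0, by omega⟩ with hc0
  set c1 : Fin n := ⟨1, by omega⟩ with hc1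
  have hc : c0 ≠ c1 := by simp [hc0, hc1, Fin.ext_iff]
  have hint : (∫ H : Matrix.orthogonalGroup (Fin n) ℝ,
        (((H : Matrix (Fin n) (Fin n) ℝ) i c0 * (H : Matrix (Fin n) (Fin n) ℝ) i' c1 -
          (H : Matrix (Fin n) (Fin n) ℝ) i c1 * (H : Matrix (Fin n) (Fin n) ℝ) i' c0) *
         ((H : Matrix (Fin n) (Fin n) ℝ) j c0 * (H : Matrix (Fin n) (Fin n) ℝ) j' c1 -
          (H : Matrix (Fin n) (Fin n) ℝ) j c1 * (H : Matrix (Fin n) (Fin n) ℝ) j' c0)) ∂μ)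
      = ∫ H, D c0 c1 i i' H * D c0 c1 j j' H ∂μ := rfl
  rw [hint]
  by_cases h1 : i = j ∧ i' = j'
  · obtain ⟨rfl, rfl⟩ := h1
    have hii' : i ≠ i' := Ne.symm hi
    rw [int_D_sq μ c0 c1 hc i i' hii']
    simp [hii']
  · by_cases h2 : i = j' ∧ j = i'
    · obtain ⟨hij', hji'⟩ := h2
      have e : (fun H => D c0 c1 i i' H * D c0 c1 j j' H)
          = fun H => (-1 : ℝ) * (D c0 c1 i i' H * D c0 c1 i i' H) := funext fun H => by
        rw [hji', ← hij']; unfold D; ring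
      rw [e, integral_const_mul, int_D_sq μ c0 c1 hc i i' (Ne.symm hi),
        if_neg (fun h => hj (hij'.symm.trans h)),
        if_neg (fun h : i' = j' => hj ((hji'.trans h).symm)),
        if_pos hij', if_pos hji']
      ring
    · -- vanishing case
      have hc0' : ∫ H, D c0 c1 i i' H * D c0 c1 j j' H ∂μ = 0 := by
        by_cases hij : i = j
        · have hij' : i' ≠ j' := fun h => h1 ⟨hij, h⟩
          refine vanish μ c0 c1 i i' j j' i' ?_
          rw [show sgn i' i = 1 from if_neg (fun h => hi h.symm),
            show sgn i' i' = -1 from if_pos rfl,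
            show sgn i' j = 1 from if_neg (fun h => hi (h.symm.trans hij.symm)),
            show sgn i' j' = 1 from if_neg (fun h => hij' h.symm)]
          ring
        · by_cases hij' : i = j'
          · have hji' : j ≠ i' := fun h => h2 ⟨hij', h⟩
            refine vanish μ c0 c1 i i' j j' j ?_
            rw [show sgn j i = 1 from if_neg (fun h => hij h),
              show sgn j i' = 1 from if_neg (fun h => hji' h.symm),
              show sgn j j = -1 from if_pos rfl,
              show sgn j j' = 1 from if_neg hj]
            ring
          · refine vanish μ c0 c1 i i' j j' i ?_
            rw [show sgn i i = -1 from if_pos rfl,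
              show sgn i i' = 1 from if_neg hi,
              show sgn i j = 1 from if_neg (fun h => hij h.symm),
              show sgn i j' = 1 from if_neg (fun h => hij' h.symm)]
            ring
      rw [hc0']
      have r1 : (if i = j then (1:ℝ) else 0) * (if i' = j' then (1:ℝ) else 0) = 0 := by
        by_cases hij : i = j
        · rw [if_neg (fun h => h1 ⟨hij, h⟩)]; ring
        · rw [if_neg hij]; ring
      have r2 : (if i = j' then (1:ℝ) else 0) * (if j = i' then (1:ℝ) else 0) = 0 := by
        by_cases hij' : i = j'
        · rw [if_neg (fun h => h2 ⟨hij', h⟩)]; ring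
        · rw [if_neg hij']; ring
      rw [r1, r2]
      ring
end

section
/- Let A be a fixed n × n real diagonal matrix with diagonal entries a₁₁, …, aₙₙ satisfying Σᵢ aᵢᵢ² = n, and let M be a random matrix in the orthogonal group O(n) distributed according to Haar probability measure. Then E[tr((AM)²)] = 1. -/
/-!
Writing `D = diagonal a`, `tr((DM)²) = Σᵢⱼ aᵢ aⱼ Mᵢⱼ Mⱼᵢ`. Left invariance of Haar measure under
the sign change of one row kills every term with `i ≠ j`, and invariance under row permutations
shows that all `Mᵢᵢ²` have the same mean, which is `1/n` since each column is a unit vector.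
Hence `E[tr((DM)²)] = Σᵢ aᵢ² / n = 1`.
-/

open MeasureTheory ProbabilityTheory Matrix

namespace Matrix

variable {ι R : Type*} [Fintype ι] [DecidableEq ι]

lemma trace_diagonal_mul_mul_diagonal_mul [CommSemiring R] (a : ι → R) (M : Matrix ι ι R) :
    (diagonal a * M * (diagonal a * M)).trace = ∑ i, ∑ j, a i * a j * (M i j * M j i) := by
  simp only [trace, diag_apply, mul_apply (M := diagonal a * M), diagonal_mul]
  exact Finset.sum_congr rfl fun i _ => Finset.sum_congr rfl fun j _ => by ring

section CommRing

variable [CommRing R]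

attribute [local instance] starRingOfComm

lemma permMatrix_mem_orthogonalGroup (σ : Equiv.Perm ι) :
    σ.permMatrix R ∈ orthogonalGroup ι R := by
  rw [mem_orthogonalGroup_iff, transpose_permMatrix, ← permMatrix_mul, inv_mul_cancel,
    permMatrix_one]

lemma diagonal_mem_orthogonalGroup {d : ι → R} (hd : ∀ i, d i * d i = 1) :
    diagonal d ∈ orthogonalGroup ι R := by
  rw [mem_orthogonalGroup_iff, diagonal_transpose, diagonal_mul_diagonal, funext hd,
    diagonal_one]

lemma orthogonalGroup.sum_apply_mul_apply_left (M : orthogonalGroup ι R) (j : ι) :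
    ∑ i, (M : Matrix ι ι R) i j * (M : Matrix ι ι R) i j = 1 := by
  simpa [mul_apply, one_apply] using congr_fun₂ ((mem_orthogonalGroup_iff' ι R).mp M.2) j j

end CommRing

namespace orthogonalGroup

lemma abs_apply_le_one (M : orthogonalGroup ι ℝ) (i j : ι) : |(M : Matrix ι ι ℝ) i j| ≤ 1 :=
  entry_norm_bound_of_unitary M.2 i j

variable [MeasurableSpace (orthogonalGroup ι ℝ)] [BorelSpace (orthogonalGroup ι ℝ)]
  (μ : Measure (orthogonalGroup ι ℝ))

lemma integrable_apply_mul_apply [IsFiniteMeasure μ] (i j k l : ι) :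
    Integrable (fun M : orthogonalGroup ι ℝ => (M : Matrix ι ι ℝ) i j * (M : Matrix ι ι ℝ) k l)
      μ := by
  have hval : Continuous fun M : orthogonalGroup ι ℝ => (M : Matrix ι ι ℝ) :=
    continuous_subtype_val
  refine .of_bound ((hval.matrix_elem i j).mul (hval.matrix_elem k l)).aestronglyMeasurable 1
    (.of_forall fun M => ?_)
  rw [norm_mul, ← one_mul 1]
  exact mul_le_mul (abs_apply_le_one M i j) (abs_apply_le_one M k l) (norm_nonneg _) zero_le_one

variable [μ.IsMulLeftInvariant]

lemma integral_apply_mul_apply_of_ne {i j : ι} (hij : i ≠ j) :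
    ∫ M : orthogonalGroup ι ℝ, (M : Matrix ι ι ℝ) i j * (M : Matrix ι ι ℝ) j i ∂μ = 0 := by
  set d : ι → ℝ := Function.update 1 i (-1)
  have hd : ∀ k, d k * d k = 1 := fun k => by
    by_cases hk : k = i <;> simp [d, hk]
  let E : orthogonalGroup ι ℝ := ⟨diagonal d, diagonal_mem_orthogonalGroup hd⟩
  have hflip := integral_mul_left_eq_self (μ := μ)
    (fun M : orthogonalGroup ι ℝ => (M : Matrix ι ι ℝ) i j * (M : Matrix ι ι ℝ) j i) E
  simp [E, diagonal_mul, d, Function.update_of_ne hij.symm, integral_neg] at hflip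
  linarith

lemma integral_apply_sq_eq_of_perm (σ : Equiv.Perm ι) (i j : ι) :
    ∫ M : orthogonalGroup ι ℝ, (M : Matrix ι ι ℝ) (σ i) j ^ 2 ∂μ =
      ∫ M : orthogonalGroup ι ℝ, (M : Matrix ι ι ℝ) i j ^ 2 ∂μ := by
  let P : orthogonalGroup ι ℝ := ⟨σ.permMatrix ℝ, permMatrix_mem_orthogonalGroup σ⟩
  have h := integral_mul_left_eq_self (μ := μ)
    (fun M : orthogonalGroup ι ℝ => (M : Matrix ι ι ℝ) i j ^ 2) P
  simpa [P, Equiv.Perm.permMatrix, PEquiv.toMatrix_toPEquiv_mul] using h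

variable [IsProbabilityMeasure μ]

lemma integral_apply_sq (i j : ι) :
    ∫ M : orthogonalGroup ι ℝ, (M : Matrix ι ι ℝ) i j ^ 2 ∂μ = (Fintype.card ι : ℝ)⁻¹ := by
  have hcol : ∑ k, ∫ M : orthogonalGroup ι ℝ, (M : Matrix ι ι ℝ) k j ^ 2 ∂μ = 1 := by
    rw [← integral_finsetSum _ fun k _ => by
      simpa only [sq] using integrable_apply_mul_apply μ k j k j]
    simp [sq, sum_apply_mul_apply_left]
  have hsame : ∀ k, ∫ M : orthogonalGroup ι ℝ, (M : Matrix ι ι ℝ) k j ^ 2 ∂μ =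
      ∫ M : orthogonalGroup ι ℝ, (M : Matrix ι ι ℝ) i j ^ 2 ∂μ := fun k => by
    simpa using integral_apply_sq_eq_of_perm μ (Equiv.swap i k) i j
  rw [Finset.sum_congr rfl fun k _ => hsame k, Finset.sum_const, Finset.card_univ,
    nsmul_eq_mul] at hcol
  exact eq_inv_of_mul_eq_one_right hcol

lemma integral_apply_mul_apply_swap (i j : ι) :
    ∫ M : orthogonalGroup ι ℝ, (M : Matrix ι ι ℝ) i j * (M : Matrix ι ι ℝ) j i ∂μ =
      if i = j then (Fintype.card ι : ℝ)⁻¹ else 0 := by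
  split_ifs with hij
  · subst hij
    simpa only [sq] using integral_apply_sq μ i i
  · exact integral_apply_mul_apply_of_ne μ hij

end orthogonalGroup

end Matrix

/-- For `A` real diagonal with `Σᵢ aᵢᵢ² = n` and `M` Haar-distributed on `O(n)`,
`E[tr((AM)²)] = 1`. -/
theorem haar_orthogonal_trace_sq_mean (n : ℕ) (hn : 0 < n)
    (a : Fin n → ℝ) (ha : ∑ i, (a i) ^ 2 = (n : ℝ))
    (μ : Measure (Matrix.orthogonalGroup (Fin n) ℝ))
    [μ.IsHaarMeasure] [IsProbabilityMeasure μ] :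
    ∫ M : Matrix.orthogonalGroup (Fin n) ℝ,
        ((Matrix.diagonal a * (M : Matrix (Fin n) (Fin n) ℝ)) *
          (Matrix.diagonal a * (M : Matrix (Fin n) (Fin n) ℝ))).trace ∂μ = 1 := by
  have hint : ∀ i j, Integrable (fun M : orthogonalGroup (Fin n) ℝ =>
      a i * a j * ((M : Matrix (Fin n) (Fin n) ℝ) i j * (M : Matrix (Fin n) (Fin n) ℝ) j i)) μ :=
    fun i j => (orthogonalGroup.integrable_apply_mul_apply μ i j j i).const_mul _
  calc _ = ∑ i, ∑ j, a i * a j * ∫ M : orthogonalGroup (Fin n) ℝ,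
          (M : Matrix (Fin n) (Fin n) ℝ) i j * (M : Matrix (Fin n) (Fin n) ℝ) j i ∂μ := by
        simp_rw [trace_diagonal_mul_mul_diagonal_mul]
        rw [integral_finsetSum _ fun i _ => integrable_finsetSum _ fun j _ => hint i j]
        simp_rw [integral_finsetSum _ fun j _ => hint _ j, integral_const_mul]
    _ = (∑ i, a i ^ 2) * (n : ℝ)⁻¹ := by
        simp [orthogonalGroup.integral_apply_mul_apply_swap, Finset.sum_mul, sq]
    _ = 1 := by
        rw [ha]
        exact mul_inv_cancel₀ (Nat.cast_ne_zero.mpr hn.ne')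
end
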